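/- arXiv:math/0604088 — 2 statements merged into one kernel-verified Lean document; each statement's English description precedes it below -/
import Mathlib

section
/- Let G be a finite simple graph and let vw be an edge of G. Then γ(G) = γ(G^{vw}), i.e. the γ invariant is unchanged by pivoting on an edge. -/
open Polynomial

universe u

variable {V : Type u}

/-- The `F_2`-rank of the adjacency matrix of the subgraph of `G` induced by `S`. -/
noncomputable def rankIn [Fintype V] (G : SimpleGraph V) (S : Finset V) : ℕ :=
  letI := Classical.decRel G.Adj
  ((SimpleGraph.adjMatrix (ZMod 2) G).submatrix
    (fun i : S => (i : V)) (fun i : S => (i : V))).rank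

/-- The vertex-nullity interlace polynomial `q_N(G;x) = Σ_{S ⊆ V} (x-1)^{n(G[S])}`. -/
noncomputable def qNull [Fintype V] (G : SimpleGraph V) : Polynomial ℤ :=
  ∑ S : Finset V, ((X : Polynomial ℤ) - 1) ^ (S.card - rankIn G S)

/-- The γ invariant: the coefficient of `x^1` in `q_N(G;x)`. -/
noncomputable def gammaInv [Fintype V] (G : SimpleGraph V) : ℤ :=
  (qNull G).coeff 1

/-- The two-variable interlace polynomial, with `x = X 0`, `y = X 1`. -/
noncomputable def interlaceQ [Fintype V] (G : SimpleGraph V) : MvPolynomial (Fin 2) ℤ :=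
  ∑ S : Finset V,
    (MvPolynomial.X 0 - 1) ^ (rankIn G S) * (MvPolynomial.X 1 - 1) ^ (S.card - rankIn G S)

/-- `x` is adjacent to `v` but not to `w` (and differs from both). -/
def adjOnly (G : SimpleGraph V) (v w x : V) : Prop :=
  x ≠ v ∧ x ≠ w ∧ G.Adj v x ∧ ¬ G.Adj w x

/-- `x` is adjacent to both `v` and `w` (and differs from both). -/
def adjBoth (G : SimpleGraph V) (v w x : V) : Prop :=
  x ≠ v ∧ x ≠ w ∧ G.Adj v x ∧ G.Adj w x

def pivotToggleHalf (G : SimpleGraph V) (v w x y : V) : Prop :=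
  (adjOnly G v w x ∧ adjOnly G w v y) ∨ (adjOnly G v w x ∧ adjBoth G v w y) ∨
    (adjOnly G w v x ∧ adjBoth G v w y)

/-- `x` and `y` lie in two distinct classes among `A_v`, `A_w`, `A_{vw}`. -/
def pivotToggle (G : SimpleGraph V) (v w x y : V) : Prop :=
  pivotToggleHalf G v w x y ∨ pivotToggleHalf G v w y x

/-- The pivot `G^{vw}`: adjacency between vertices in distinct classes among
`A_v`, `A_w`, `A_{vw}` is toggled; all other adjacencies are unchanged. -/
def pivot (G : SimpleGraph V) (v w : V) : SimpleGraph V where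
  Adj x y := x ≠ y ∧
    ((pivotToggle G v w x y ∧ ¬ G.Adj x y) ∨ (¬ pivotToggle G v w x y ∧ G.Adj x y))
  symm := by
    constructor
    intro x y h
    obtain ⟨hne, h⟩ := h
    have hsym : pivotToggle G v w y x ↔ pivotToggle G v w x y := by
      unfold pivotToggle; exact or_comm
    refine ⟨hne.symm, ?_⟩
    rcases h with ⟨ht, hna⟩ | ⟨ht, ha⟩
    · exact Or.inl ⟨hsym.mpr ht, fun hyx => hna hyx.symm⟩
    · exact Or.inr ⟨fun hyx => ht (hsym.mp hyx), ha.symm⟩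
  loopless := ⟨fun x h => h.1 rfl⟩

/-- Deleting the vertex `v`: the induced subgraph on `V \ {v}`. -/
def delVert (G : SimpleGraph V) (v : V) : SimpleGraph {x : V // x ≠ v} :=
  SimpleGraph.comap Subtype.val G

/-- The induced subgraph on a finite vertex subset. -/
def inducedF (G : SimpleGraph V) (s : Finset V) : SimpleGraph {x : V // x ∈ s} :=
  SimpleGraph.comap Subtype.val G

/-- Adding a new pendant vertex (`none`) attached to `u`. -/
def addPendant (G : SimpleGraph V) (u : V) : SimpleGraph (Option V) :=
  SimpleGraph.fromRel (fun x y =>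
    (x = none ∧ y = some u) ∨ ∃ a b, x = some a ∧ y = some b ∧ G.Adj a b)

/-- Adding a new false twin (`none`) of the vertex `v`. -/
def addFalseTwin (G : SimpleGraph V) (v : V) : SimpleGraph (Option V) :=
  SimpleGraph.fromRel (fun x y =>
    (∃ a, x = none ∧ y = some a ∧ G.Adj v a) ∨ ∃ a b, x = some a ∧ y = some b ∧ G.Adj a b)

/-- Adding a new true twin (`none`) of the vertex `v`. -/
def addTrueTwin (G : SimpleGraph V) (v : V) : SimpleGraph (Option V) :=
  SimpleGraph.fromRel (fun x y =>
    (x = none ∧ y = some v) ∨ (∃ a, x = none ∧ y = some a ∧ G.Adj v a) ∨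
      ∃ a b, x = some a ∧ y = some b ∧ G.Adj a b)
/-- `G` is a bipartite distance hereditary graph: obtainable (up to isomorphism) from a
one-vertex graph by adding pendant vertices and false twins of non-isolated vertices. -/
inductive IsBDH : {W : Type u} → SimpleGraph W → Prop
  | single : IsBDH (⊥ : SimpleGraph PUnit)
  | pendant {W : Type u} (G : SimpleGraph W) (u : W) : IsBDH G → IsBDH (addPendant G u)
  | falseTwin {W : Type u} (G : SimpleGraph W) (v : W) (hv : ∃ x, G.Adj v x) :
      IsBDH G → IsBDH (addFalseTwin G v)
  | iso {W W' : Type u} (G : SimpleGraph W) (H : SimpleGraph W') :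
      IsBDH G → G ≃g H → IsBDH H

/-- `DHConstruction G n` : `G` admits a DH construction sequence (up to isomorphism,
starting from a one-vertex graph, adding pendant vertices, false twins and true twins of
non-isolated vertices) with exactly `n` true twins. -/
inductive DHConstruction : {W : Type u} → SimpleGraph W → ℕ → Prop
  | single : DHConstruction (⊥ : SimpleGraph PUnit) 0
  | pendant {W : Type u} (G : SimpleGraph W) (u : W) {n : ℕ} :
      DHConstruction G n → DHConstruction (addPendant G u) n
  | falseTwin {W : Type u} (G : SimpleGraph W) (v : W) (hv : ∃ x, G.Adj v x) {n : ℕ} :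
      DHConstruction G n → DHConstruction (addFalseTwin G v) n
  | trueTwin {W : Type u} (G : SimpleGraph W) (v : W) (hv : ∃ x, G.Adj v x) {n : ℕ} :
      DHConstruction G n → DHConstruction (addTrueTwin G v) (n + 1)
  | iso {W W' : Type u} (G : SimpleGraph W) (H : SimpleGraph W') {n : ℕ} :
      DHConstruction G n → G ≃g H → DHConstruction H n


section PivotAux
variable {G : SimpleGraph V} {v w : V}

lemma pivotToggle_iff {i j : V} (hiv : i ≠ v) (hiw : i ≠ w) (hjv : j ≠ v) (hjw : j ≠ w) :
    pivotToggle G v w i j ↔ Xor' (G.Adj v i ∧ G.Adj w j) (G.Adj w i ∧ G.Adj v j) := by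
  by_cases h1 : G.Adj v i <;> by_cases h2 : G.Adj w i <;>
    by_cases h3 : G.Adj v j <;> by_cases h4 : G.Adj w j <;>
    simp [pivotToggle, pivotToggleHalf, adjOnly, adjBoth, hiv, hiw, hjv, hjw,
      h1, h2, h3, h4, Xor']

lemma pivotToggle_false_left {i j : V} (h : i = v ∨ i = w) : ¬ pivotToggle G v w i j := by
  unfold pivotToggle pivotToggleHalf adjOnly adjBoth
  rcases h with h | h <;> subst h <;> tauto

lemma pivotToggle_false_right {i j : V} (h : j = v ∨ j = w) : ¬ pivotToggle G v w i j := by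
  unfold pivotToggle pivotToggleHalf adjOnly adjBoth
  rcases h with h | h <;> subst h <;> tauto

end PivotAux

section PivotMat
variable [Fintype V] [DecidableEq V] (G : SimpleGraph V) [DecidableRel G.Adj] (v w : V)

def pivMat : Matrix V V (ZMod 2) := fun i j =>
  if i = v then (if j = v then 0 else if j = w then 1 else G.adjMatrix (ZMod 2) w j)
  else if i = w then (if j = w then 0 else if j = v then 1 else G.adjMatrix (ZMod 2) v j)
  else if j = v then G.adjMatrix (ZMod 2) i w
  else if j = w then G.adjMatrix (ZMod 2) i v
  else G.adjMatrix (ZMod 2) i j + G.adjMatrix (ZMod 2) v i * G.adjMatrix (ZMod 2) w j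
    + G.adjMatrix (ZMod 2) w i * G.adjMatrix (ZMod 2) v j

variable {G v w}

omit [Fintype V] [DecidableEq V] [DecidableRel G.Adj] in
lemma pivot_adj_iff' {x y : V} : (pivot G v w).Adj x y ↔ (x ≠ y ∧
    ((pivotToggle G v w x y ∧ ¬ G.Adj x y) ∨ (¬ pivotToggle G v w x y ∧ G.Adj x y))) :=
  Iff.rfl

omit [Fintype V] [DecidableEq V] [DecidableRel G.Adj] in
lemma pivot_adj_left {a j : V} (h : a = v ∨ a = w) :
    (pivot G v w).Adj a j ↔ G.Adj a j := by
  rw [pivot_adj_iff']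
  constructor
  · rintro ⟨hne, (⟨ht, _⟩ | ⟨_, ha⟩)⟩
    · exact absurd ht (pivotToggle_false_left h)
    · exact ha
  · intro ha; exact ⟨ha.ne, Or.inr ⟨pivotToggle_false_left h, ha⟩⟩

omit [Fintype V] [DecidableEq V] [DecidableRel G.Adj] in
lemma pivot_adj_right {i b : V} (h : b = v ∨ b = w) :
    (pivot G v w).Adj i b ↔ G.Adj i b :=
  ⟨fun hh => ((pivot_adj_left h).mp hh.symm).symm,
   fun hh => ((pivot_adj_left h).mpr hh.symm).symm⟩

omit [Fintype V] [DecidableEq V] [DecidableRel G.Adj] in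
lemma pivot_adj_out {i j : V} (hiv : i ≠ v) (hiw : i ≠ w) (hjv : j ≠ v) (hjw : j ≠ w)
    (hij : i ≠ j) :
    (pivot G v w).Adj i j ↔
      ((Xor' (G.Adj v i ∧ G.Adj w j) (G.Adj w i ∧ G.Adj v j) ∧ ¬ G.Adj i j) ∨
        (¬ Xor' (G.Adj v i ∧ G.Adj w j) (G.Adj w i ∧ G.Adj v j) ∧ G.Adj i j)) := by
  have hT := pivotToggle_iff hiv hiw hjv hjw (G := G) (i := i) (j := j)
  rw [pivot_adj_iff']
  constructor
  · rintro ⟨_, h⟩; rw [← hT]; exact h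
  · intro h; rw [← hT] at h; exact ⟨hij, h⟩

lemma adjMatrix_pivotSwap (hvw : G.Adj v w)
    [DecidableRel ((pivot G v w).comap (⇑(Equiv.swap v w))).Adj] :
    SimpleGraph.adjMatrix (ZMod 2) ((pivot G v w).comap (⇑(Equiv.swap v w))) = pivMat G v w := by
  have hne : v ≠ w := hvw.ne
  ext i j
  have hAdj : ∀ a b : V, ((pivot G v w).comap (⇑(Equiv.swap v w))).Adj a b ↔
      (pivot G v w).Adj (Equiv.swap v w a) (Equiv.swap v w b) := fun a b => Iff.rfl
  simp only [SimpleGraph.adjMatrix_apply, pivMat]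
  by_cases hiv : i = v
  · rw [if_pos hiv]
    have hsi : Equiv.swap v w i = w := by rw [hiv, Equiv.swap_apply_left]
    by_cases hjv : j = v
    · have hsj : Equiv.swap v w j = w := by rw [hjv, Equiv.swap_apply_left]
      have hiff : ¬ ((pivot G v w).comap (⇑(Equiv.swap v w))).Adj i j := by
        rw [hAdj i j, hsi, hsj]; exact (pivot G v w).irrefl
      rw [if_pos hjv, if_neg hiff]
    · rw [if_neg hjv]
      by_cases hjw : j = w
      · have hsj : Equiv.swap v w j = v := by rw [hjw, Equiv.swap_apply_right]
        have hiff : ((pivot G v w).comap (⇑(Equiv.swap v w))).Adj i j := by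
          rw [hAdj i j, hsi, hsj]
          exact (pivot_adj_left (Or.inr rfl)).mpr hvw.symm
        rw [if_pos hjw, if_pos hiff]
      · have hsj : Equiv.swap v w j = j := Equiv.swap_apply_of_ne_of_ne hjv hjw
        have hiff : ((pivot G v w).comap (⇑(Equiv.swap v w))).Adj i j ↔ G.Adj w j :=
          (hAdj i j).trans (by rw [hsi, hsj]; exact pivot_adj_left (Or.inr rfl))
        rw [if_neg hjw, if_congr hiff rfl rfl]
  · rw [if_neg hiv]
    by_cases hiw : i = w
    · rw [if_pos hiw]
      have hsi : Equiv.swap v w i = v := by rw [hiw, Equiv.swap_apply_right]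
      by_cases hjw : j = w
      · have hsj : Equiv.swap v w j = v := by rw [hjw, Equiv.swap_apply_right]
        have hiff : ¬ ((pivot G v w).comap (⇑(Equiv.swap v w))).Adj i j := by
          rw [hAdj i j, hsi, hsj]; exact (pivot G v w).irrefl
        rw [if_pos hjw, if_neg hiff]
      · rw [if_neg hjw]
        by_cases hjv : j = v
        · have hsj : Equiv.swap v w j = w := by rw [hjv, Equiv.swap_apply_left]
          have hiff : ((pivot G v w).comap (⇑(Equiv.swap v w))).Adj i j := by
            rw [hAdj i j, hsi, hsj]
            exact (pivot_adj_left (Or.inl rfl)).mpr hvw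
          rw [if_pos hjv, if_pos hiff]
        · have hsj : Equiv.swap v w j = j := Equiv.swap_apply_of_ne_of_ne hjv hjw
          have hiff : ((pivot G v w).comap (⇑(Equiv.swap v w))).Adj i j ↔ G.Adj v j :=
            (hAdj i j).trans (by rw [hsi, hsj]; exact pivot_adj_left (Or.inl rfl))
          rw [if_neg hjv, if_congr hiff rfl rfl]
    · rw [if_neg hiw]
      have hsi : Equiv.swap v w i = i := Equiv.swap_apply_of_ne_of_ne hiv hiw
      by_cases hjv : j = v
      · have hsj : Equiv.swap v w j = w := by rw [hjv, Equiv.swap_apply_left]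
        have hiff : ((pivot G v w).comap (⇑(Equiv.swap v w))).Adj i j ↔ G.Adj i w :=
          (hAdj i j).trans (by rw [hsi, hsj]; exact pivot_adj_right (Or.inr rfl))
        rw [if_pos hjv, if_congr hiff rfl rfl]
      · rw [if_neg hjv]
        by_cases hjw : j = w
        · have hsj : Equiv.swap v w j = v := by rw [hjw, Equiv.swap_apply_right]
          have hiff : ((pivot G v w).comap (⇑(Equiv.swap v w))).Adj i j ↔ G.Adj i v :=
            (hAdj i j).trans (by rw [hsi, hsj]; exact pivot_adj_right (Or.inl rfl))
          rw [if_pos hjw, if_congr hiff rfl rfl]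
        · have hsj : Equiv.swap v w j = j := Equiv.swap_apply_of_ne_of_ne hjv hjw
          rw [if_neg hjw]
          by_cases hij : i = j
          · subst hij
            have hiff : ¬ ((pivot G v w).comap (⇑(Equiv.swap v w))).Adj i i := by
              rw [hAdj i i, hsi]; exact (pivot G v w).irrefl
            rw [if_neg hiff]
            by_cases h1 : G.Adj v i <;> by_cases h2 : G.Adj w i <;>
              simp [h1, h2, SimpleGraph.irrefl] <;> decide
          · have hiff : ((pivot G v w).comap (⇑(Equiv.swap v w))).Adj i j ↔
                ((Xor' (G.Adj v i ∧ G.Adj w j) (G.Adj w i ∧ G.Adj v j) ∧ ¬ G.Adj i j) ∨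
                  (¬ Xor' (G.Adj v i ∧ G.Adj w j) (G.Adj w i ∧ G.Adj v j) ∧ G.Adj i j)) :=
              (hAdj i j).trans (by rw [hsi, hsj]; exact pivot_adj_out hiv hiw hjv hjw hij)
            classical
            rw [if_congr hiff rfl rfl]
            by_cases h1 : G.Adj v i <;> by_cases h2 : G.Adj w i <;>
              by_cases h3 : G.Adj v j <;> by_cases h4 : G.Adj w j <;>
              by_cases h5 : G.Adj i j <;>
              simp [Xor', h1, h2, h3, h4, h5] <;> decide

end PivotMat

section PhiMap
variable [Fintype V] [DecidableEq V] (G : SimpleGraph V) [DecidableRel G.Adj] (v w : V)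

def phiMap : (V → ZMod 2) →ₗ[ZMod 2] (V → ZMod 2) where
  toFun x i := if i = v then (G.adjMatrix (ZMod 2)).mulVec x v
    else if i = w then (G.adjMatrix (ZMod 2)).mulVec x w else x i
  map_add' x y := by
    ext i
    by_cases h1 : i = v <;> by_cases h2 : i = w <;>
      simp [h1, h2, Matrix.mulVec_add, Finset.sum_add_distrib] <;>
      split_ifs <;> simp [Finset.sum_add_distrib]
  map_smul' c x := by
    ext i
    by_cases h1 : i = v <;> by_cases h2 : i = w <;>
      simp [h1, h2, Matrix.mulVec_smul, Finset.mul_sum] <;>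
      split_ifs <;> simp [Finset.mul_sum]

variable {G v w}

omit [Fintype V] in
lemma sum_split [Fintype V] (hne : v ≠ w) (f : V → ZMod 2) :
    ∑ j, f j = f v + f w + ∑ j ∈ Finset.univ \ {v, w}, f j := by
  rw [← Finset.sum_sdiff (Finset.subset_univ ({v, w} : Finset V)), Finset.sum_pair hne]
  ring

lemma phiMap_apply_mem {x : V → ZMod 2} {j : V} (hjv : j ≠ v) (hjw : j ≠ w) :
    phiMap G v w x j = x j := by simp [phiMap, hjv, hjw]

lemma phiMap_apply_v (x : V → ZMod 2) :
    phiMap G v w x v = (G.adjMatrix (ZMod 2)).mulVec x v := by simp [phiMap]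

lemma phiMap_apply_w (hne : v ≠ w) (x : V → ZMod 2) :
    phiMap G v w x w = (G.adjMatrix (ZMod 2)).mulVec x w := by simp [phiMap, hne.symm]

lemma adjMatrix_symm_entry (i j : V) :
    G.adjMatrix (ZMod 2) i j = G.adjMatrix (ZMod 2) j i := by
  by_cases h : G.Adj i j
  · have h2 : G.Adj j i := h.symm
    simp [h, h2]
  · have h2 : ¬ G.Adj j i := fun hh => h hh.symm
    simp [h, h2]

lemma pivMat_mulVec (hvw : G.Adj v w) (x : V → ZMod 2) (i : V) :
    (pivMat G v w).mulVec (phiMap G v w x) i =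
      if i = v then x v else if i = w then x w
      else (G.adjMatrix (ZMod 2)).mulVec x i := by
  have hne : v ≠ w := hvw.ne
  have hmem : ∀ j ∈ Finset.univ \ ({v, w} : Finset V), j ≠ v ∧ j ≠ w := by
    intro j hj
    simp only [Finset.mem_sdiff, Finset.mem_insert, Finset.mem_singleton] at hj
    exact ⟨fun h => hj.2 (Or.inl h), fun h => hj.2 (Or.inr h)⟩
  have hyv : (G.adjMatrix (ZMod 2)).mulVec x v
      = x w + ∑ j ∈ Finset.univ \ ({v, w} : Finset V), G.adjMatrix (ZMod 2) v j * x j := by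
    rw [Matrix.mulVec, dotProduct,
      sum_split hne (fun j => G.adjMatrix (ZMod 2) v j * x j)]
    simp [hvw]
  have hyw : (G.adjMatrix (ZMod 2)).mulVec x w
      = x v + ∑ j ∈ Finset.univ \ ({v, w} : Finset V), G.adjMatrix (ZMod 2) w j * x j := by
    rw [Matrix.mulVec, dotProduct,
      sum_split hne (fun j => G.adjMatrix (ZMod 2) w j * x j)]
    simp [hvw.symm]
  have hsplit : (pivMat G v w).mulVec (phiMap G v w x) i
      = pivMat G v w i v * (G.adjMatrix (ZMod 2)).mulVec x v
        + pivMat G v w i w * (G.adjMatrix (ZMod 2)).mulVec x w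
        + ∑ j ∈ Finset.univ \ ({v, w} : Finset V), pivMat G v w i j * x j := by
    rw [Matrix.mulVec, dotProduct,
      sum_split hne (fun j => pivMat G v w i j * phiMap G v w x j)]
    rw [phiMap_apply_v, phiMap_apply_w hne]
    congr 1
    exact Finset.sum_congr rfl fun j hj => by
      rw [phiMap_apply_mem (hmem j hj).1 (hmem j hj).2]
  by_cases hiv : i = v
  · rw [if_pos hiv, hsplit]
    have h1 : pivMat G v w i v = 0 := by simp [pivMat, hiv]
    have h2 : pivMat G v w i w = 1 := by simp [pivMat, hiv, hne.symm]
    have h3 : ∑ j ∈ Finset.univ \ ({v, w} : Finset V), pivMat G v w i j * x j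
        = ∑ j ∈ Finset.univ \ ({v, w} : Finset V), G.adjMatrix (ZMod 2) w j * x j :=
      Finset.sum_congr rfl fun j hj => by
        simp [pivMat, hiv, (hmem j hj).1, (hmem j hj).2]
    rw [h1, h2, h3, hyw]
    generalize (G.adjMatrix (ZMod 2)).mulVec x v = t
    generalize (∑ j ∈ Finset.univ \ ({v, w} : Finset V), G.adjMatrix (ZMod 2) w j * x j) = S
    generalize x v = a
    revert t S a; decide
  · rw [if_neg hiv]
    by_cases hiw : i = w
    · rw [if_pos hiw, hsplit]
      have h1 : pivMat G v w i w = 0 := by simp [pivMat, hiv, hiw, hne.symm]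
      have h2 : pivMat G v w i v = 1 := by simp [pivMat, hiv, hiw, hne, hne.symm]
      have h3 : ∑ j ∈ Finset.univ \ ({v, w} : Finset V), pivMat G v w i j * x j
          = ∑ j ∈ Finset.univ \ ({v, w} : Finset V), G.adjMatrix (ZMod 2) v j * x j :=
        Finset.sum_congr rfl fun j hj => by
          simp [pivMat, hiv, hiw, hne, hne.symm, (hmem j hj).1, (hmem j hj).2]
      rw [h1, h2, h3, hyv]
      generalize (G.adjMatrix (ZMod 2)).mulVec x w = t
      generalize (∑ j ∈ Finset.univ \ ({v, w} : Finset V), G.adjMatrix (ZMod 2) v j * x j) = S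
      generalize x w = a
      revert t S a; decide
    · rw [if_neg hiw, hsplit]
      have h1 : pivMat G v w i v = G.adjMatrix (ZMod 2) i w := by simp [pivMat, hiv, hiw]
      have h2 : pivMat G v w i w = G.adjMatrix (ZMod 2) i v := by
        simp [pivMat, hiv, hiw, hne.symm]
      have h3 : ∑ j ∈ Finset.univ \ ({v, w} : Finset V), pivMat G v w i j * x j
          = (∑ j ∈ Finset.univ \ ({v, w} : Finset V), G.adjMatrix (ZMod 2) i j * x j)
            + G.adjMatrix (ZMod 2) i v * (∑ j ∈ Finset.univ \ ({v, w} : Finset V), G.adjMatrix (ZMod 2) w j * x j)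
            + G.adjMatrix (ZMod 2) i w * (∑ j ∈ Finset.univ \ ({v, w} : Finset V), G.adjMatrix (ZMod 2) v j * x j) := by
        rw [Finset.mul_sum, Finset.mul_sum, ← Finset.sum_add_distrib, ← Finset.sum_add_distrib]
        refine Finset.sum_congr rfl fun j hj => ?_
        have hj1 := (hmem j hj).1
        have hj2 := (hmem j hj).2
        have he : pivMat G v w i j = G.adjMatrix (ZMod 2) i j
            + G.adjMatrix (ZMod 2) v i * G.adjMatrix (ZMod 2) w j
            + G.adjMatrix (ZMod 2) w i * G.adjMatrix (ZMod 2) v j := by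
          simp [pivMat, hiv, hiw, hj1, hj2]
        rw [he, adjMatrix_symm_entry v i, adjMatrix_symm_entry w i]
        ring
      have hyi : (G.adjMatrix (ZMod 2)).mulVec x i
          = G.adjMatrix (ZMod 2) i v * x v + G.adjMatrix (ZMod 2) i w * x w
            + ∑ j ∈ Finset.univ \ ({v, w} : Finset V), G.adjMatrix (ZMod 2) i j * x j := by
        rw [Matrix.mulVec, dotProduct,
          sum_split hne (fun j => G.adjMatrix (ZMod 2) i j * x j)]
      rw [h1, h2, h3, hyv, hyw, hyi]
      generalize (∑ j ∈ Finset.univ \ ({v, w} : Finset V), G.adjMatrix (ZMod 2) i j * x j) = S1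
      generalize (∑ j ∈ Finset.univ \ ({v, w} : Finset V), G.adjMatrix (ZMod 2) v j * x j) = Sv
      generalize (∑ j ∈ Finset.univ \ ({v, w} : Finset V), G.adjMatrix (ZMod 2) w j * x j) = Sw
      generalize G.adjMatrix (ZMod 2) i v = t1
      generalize G.adjMatrix (ZMod 2) i w = t2
      generalize x v = a
      generalize x w = b
      revert S1 Sv Sw t1 t2 a b; decide

end PhiMap

section LinAlgAux
open Matrix Module
variable [Fintype V] [DecidableEq V]
set_option linter.unusedSectionVars false

/-- extension by zero -/
noncomputable def extz (S : Finset V) : (S → ZMod 2) →ₗ[ZMod 2] (V → ZMod 2) where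
  toFun z i := if h : i ∈ S then z ⟨i, h⟩ else 0
  map_add' x y := by ext i; by_cases h : i ∈ S <;> simp [h]
  map_smul' c x := by ext i; by_cases h : i ∈ S <;> simp [h]

def kerSet (A : Matrix V V (ZMod 2)) (S : Finset V) : Submodule (ZMod 2) (V → ZMod 2) where
  carrier := {x | (∀ i ∉ S, x i = 0) ∧ ∀ i ∈ S, A.mulVec x i = 0}
  add_mem' := by
    rintro x y ⟨hx1, hx2⟩ ⟨hy1, hy2⟩
    refine ⟨fun i hi => by simp [hx1 i hi, hy1 i hi], fun i hi => ?_⟩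
    rw [Matrix.mulVec_add]
    simp [hx2 i hi, hy2 i hi]
  zero_mem' := ⟨fun i _ => rfl, fun i _ => by simp⟩
  smul_mem' := by
    rintro c x ⟨h1, h2⟩
    refine ⟨fun i hi => by simp [h1 i hi], fun i hi => ?_⟩
    rw [Matrix.mulVec_smul]
    simp [h2 i hi]

lemma mem_kerSet_iff {A : Matrix V V (ZMod 2)} {S : Finset V} {x : V → ZMod 2} :
    x ∈ kerSet A S ↔ (∀ i ∉ S, x i = 0) ∧ ∀ i ∈ S, A.mulVec x i = 0 := Iff.rfl

lemma mulVec_eq_sub (A : Matrix V V (ZMod 2)) (S : Finset V) (x : V → ZMod 2)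
    (hx : ∀ i ∉ S, x i = 0) (i : V) :
    A.mulVec x i = ∑ j : S, A i (j : V) * x j := by
  rw [Finset.sum_coe_sort S (fun j => A i j * x j)]
  rw [Matrix.mulVec, dotProduct]
  refine (Finset.sum_subset (Finset.subset_univ S) ?_).symm
  intro j _ hj
  simp [hx j hj]

lemma kerSet_eq_map (A : Matrix V V (ZMod 2)) (S : Finset V) :
    kerSet A S = Submodule.map (extz S) (LinearMap.ker
      ((A.submatrix (fun i : S => (i : V)) (fun i : S => (i : V))).mulVecLin)) := by
  ext x
  simp only [Submodule.mem_map, LinearMap.mem_ker, mem_kerSet_iff]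
  constructor
  · rintro ⟨h1, h2⟩
    refine ⟨fun j => x j, ?_, ?_⟩
    · ext i
      have : (A.submatrix (fun i : S => (i : V)) (fun i : S => (i : V))).mulVec
          (fun j : S => x j) i = A.mulVec x (i : V) := by
        rw [mulVec_eq_sub A S x h1]
        simp [Matrix.mulVec, dotProduct, Matrix.submatrix]
      simp only [Matrix.mulVecLin_apply]
      rw [this, h2 i i.2]
      rfl
    · ext i
      by_cases h : i ∈ S
      · simp [extz, h]
      · simp [extz, h, h1 i h]
  · rintro ⟨z, hz, rfl⟩
    have hzero : ∀ i ∉ S, extz S z i = 0 := by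
      intro i hi; simp [extz, hi]
    refine ⟨hzero, fun i hi => ?_⟩
    rw [mulVec_eq_sub A S _ hzero]
    have := congrFun hz ⟨i, hi⟩
    simp only [Matrix.mulVecLin_apply, Pi.zero_apply] at this
    rw [← this]
    simp [Matrix.mulVec, dotProduct, Matrix.submatrix, extz]

lemma rank_add_nullity (A : Matrix V V (ZMod 2)) (S : Finset V) :
    (A.submatrix (fun i : S => (i : V)) (fun i : S => (i : V))).rank
      + finrank (ZMod 2) (kerSet A S) = S.card := by
  have hinj : Function.Injective (extz S) := by
    intro a b h
    ext ⟨i, hi⟩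
    have := congrFun h i
    simpa [extz, hi] using this
  rw [kerSet_eq_map]
  rw [← LinearEquiv.finrank_eq (Submodule.equivMapOfInjective _ hinj _)]
  rw [Matrix.rank, LinearMap.finrank_range_add_finrank_ker]
  simp [Module.finrank_pi]

end LinAlgAux

section ComapAux
open Matrix Module
variable [Fintype V]
set_option linter.unusedSectionVars false

lemma adjMatrix_comap (P : SimpleGraph V) (e : V ≃ V) [DecidableRel P.Adj]
    [DecidableRel (P.comap e).Adj] :
    SimpleGraph.adjMatrix (ZMod 2) (P.comap ⇑e) =
      (SimpleGraph.adjMatrix (ZMod 2) P).submatrix e e := by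
  ext i j
  by_cases h : P.Adj (e i) (e j) <;>
    simp [SimpleGraph.adjMatrix_apply, Matrix.submatrix_apply, SimpleGraph.comap_adj, h]

lemma rankIn_comap (P : SimpleGraph V) (e : V ≃ V) (S : Finset V) [DecidableEq V] :
    rankIn (P.comap ⇑e) S = rankIn P (S.map e.toEmbedding) := by
  classical
  unfold rankIn
  rw [@adjMatrix_comap V _ P e (Classical.decRel _) (Classical.decRel _)]
  let T := S.map e.toEmbedding
  let ee : {x // x ∈ S} ≃ {x // x ∈ T} :=
    { toFun := fun i => ⟨e i, Finset.mem_map.mpr ⟨i, i.2, rfl⟩⟩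
      invFun := fun i => ⟨e.symm i, by
        obtain ⟨a, ha, hae⟩ := Finset.mem_map.mp i.2
        have h2 : e.symm ↑i = a := by rw [← hae]; simp
        rw [h2]; exact ha⟩
      left_inv := fun i => by ext; simp
      right_inv := fun i => by ext; simp }
  have key : (((SimpleGraph.adjMatrix (ZMod 2) P).submatrix
      (fun i : T => (i : V)) (fun i : T => (i : V))).submatrix ee ee).rank
      = ((SimpleGraph.adjMatrix (ZMod 2) P).submatrix
      (fun i : T => (i : V)) (fun i : T => (i : V))).rank :=
    Matrix.rank_submatrix _ ee ee
  rw [Matrix.submatrix_submatrix] at key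
  rw [← key]
  congr 1

lemma qNull_comap (P : SimpleGraph V) (e : V ≃ V) : qNull (P.comap ⇑e) = qNull P := by
  classical
  unfold qNull
  rw [Fintype.sum_equiv e.finsetCongr (fun S => ((X : Polynomial ℤ) - 1) ^ (S.card - rankIn (P.comap ⇑e) S))
    (fun T => ((X : Polynomial ℤ) - 1) ^ (T.card - rankIn P T)) ?_]
  intro S
  rw [rankIn_comap P e S]
  simp [Equiv.finsetCongr]

end ComapAux

section TransferAux
open Matrix Module
set_option linter.unusedSectionVars false
variable [Fintype V] [DecidableEq V] {G : SimpleGraph V} [DecidableRel G.Adj] {v w : V}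

lemma phiMap_injective (hvw : G.Adj v w) : Function.Injective (phiMap G v w) := by
  intro a b hab
  have h0 : phiMap G v w (a - b) = 0 := by rw [map_sub, hab, sub_self]
  have hout : ∀ j, j ≠ v → j ≠ w → (a - b) j = 0 := by
    intro j hjv hjw
    rw [← phiMap_apply_mem (G := G) (x := a - b) hjv hjw, h0]; rfl
  have hz : a - b = 0 := by
    funext i
    by_cases hiv : i = v
    · have hv := pivMat_mulVec hvw (a - b) v
      rw [h0, Matrix.mulVec_zero, if_pos rfl] at hv
      rw [hiv, Pi.zero_apply, ← hv]; rfl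
    · by_cases hiw : i = w
      · have hw := pivMat_mulVec hvw (a - b) w
        rw [h0, Matrix.mulVec_zero, if_neg (Ne.symm hvw.ne), if_pos rfl] at hw
        rw [hiw, Pi.zero_apply, ← hw]; rfl
      · rw [hout i hiv hiw]; rfl
  exact sub_eq_zero.mp hz

lemma phiMap_mem_iff (hvw : G.Adj v w) (Y : Finset V) (x : V → ZMod 2) :
    phiMap G v w x ∈ kerSet (pivMat G v w) Y ↔
      x ∈ kerSet (G.adjMatrix (ZMod 2)) (symmDiff ({v, w} : Finset V) Y) := by
  have hne : v ≠ w := hvw.ne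
  have hvX : v ∈ ({v, w} : Finset V) := by simp
  have hwX : w ∈ ({v, w} : Finset V) := by simp
  have hPMV := pivMat_mulVec hvw x
  rw [mem_kerSet_iff, mem_kerSet_iff]
  constructor
  · rintro ⟨h1, h2⟩
    constructor
    · intro i hi
      by_cases hiv : i = v
      · rw [hiv] at hi ⊢
        have hY : v ∈ Y := by
          by_contra hY
          exact hi (Finset.mem_symmDiff.mpr (Or.inl ⟨hvX, hY⟩))
        have := h2 v hY
        rw [hPMV v, if_pos rfl] at this
        exact this
      · by_cases hiw : i = w
        · rw [hiw] at hi ⊢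
          have hY : w ∈ Y := by
            by_contra hY
            exact hi (Finset.mem_symmDiff.mpr (Or.inl ⟨hwX, hY⟩))
          have := h2 w hY
          rw [hPMV w, if_neg hne.symm, if_pos rfl] at this
          exact this
        · have hY : i ∉ Y := by
            intro hY
            refine hi (Finset.mem_symmDiff.mpr (Or.inr ⟨hY, ?_⟩))
            simp [hiv, hiw]
          have := h1 i hY
          rw [phiMap_apply_mem hiv hiw] at this
          exact this
    · intro i hi
      by_cases hiv : i = v
      · rw [hiv] at hi ⊢
        have hY : v ∉ Y := by
          intro hY
          rcases Finset.mem_symmDiff.mp hi with ⟨_, h⟩ | ⟨_, h⟩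
          · exact h hY
          · exact h hvX
        have := h1 v hY
        rw [phiMap_apply_v] at this
        exact this
      · by_cases hiw : i = w
        · rw [hiw] at hi ⊢
          have hY : w ∉ Y := by
            intro hY
            rcases Finset.mem_symmDiff.mp hi with ⟨_, h⟩ | ⟨_, h⟩
            · exact h hY
            · exact h hwX
          have := h1 w hY
          rw [phiMap_apply_w hne] at this
          exact this
        · have hY : i ∈ Y := by
            rcases Finset.mem_symmDiff.mp hi with ⟨h, _⟩ | ⟨h, _⟩
            · exfalso
              rcases Finset.mem_insert.mp h with h' | h'
              · exact hiv h'
              · exact hiw (Finset.mem_singleton.mp h')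
            · exact h
          have := h2 i hY
          rw [hPMV i, if_neg hiv, if_neg hiw] at this
          exact this
  · rintro ⟨h1, h2⟩
    constructor
    · intro i hi
      by_cases hiv : i = v
      · rw [hiv]
        rw [phiMap_apply_v]
        refine h2 v ?_
        exact Finset.mem_symmDiff.mpr (Or.inl ⟨hvX, hiv ▸ hi⟩)
      · by_cases hiw : i = w
        · rw [hiw, phiMap_apply_w hne]
          refine h2 w ?_
          exact Finset.mem_symmDiff.mpr (Or.inl ⟨hwX, hiw ▸ hi⟩)
        · rw [phiMap_apply_mem hiv hiw]
          refine h1 i ?_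
          intro hD
          rcases Finset.mem_symmDiff.mp hD with ⟨h, _⟩ | ⟨h, _⟩
          · rcases Finset.mem_insert.mp h with h' | h'
            · exact hiv h'
            · exact hiw (Finset.mem_singleton.mp h')
          · exact hi h
    · intro i hi
      rw [hPMV i]
      by_cases hiv : i = v
      · rw [if_pos hiv]
        refine h1 v ?_
        intro hD
        rcases Finset.mem_symmDiff.mp hD with ⟨_, h⟩ | ⟨_, h⟩
        · exact h (hiv ▸ hi)
        · exact h hvX
      · rw [if_neg hiv]
        by_cases hiw : i = w
        · rw [if_pos hiw]
          refine h1 w ?_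
          intro hD
          rcases Finset.mem_symmDiff.mp hD with ⟨_, h⟩ | ⟨_, h⟩
          · exact h (hiw ▸ hi)
          · exact h hwX
        · rw [if_neg hiw]
          refine h2 i ?_
          refine Finset.mem_symmDiff.mpr (Or.inr ⟨hi, ?_⟩)
          simp [hiv, hiw]

lemma nullity_transfer (hvw : G.Adj v w) (Y : Finset V) :
    finrank (ZMod 2) (kerSet (pivMat G v w) Y)
      = finrank (ZMod 2)
        (kerSet (G.adjMatrix (ZMod 2)) (symmDiff ({v, w} : Finset V) Y)) := by
  have hinj := phiMap_injective hvw
  have hsurj : Function.Surjective (phiMap G v w) :=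
    LinearMap.injective_iff_surjective.mp hinj
  have hmap : kerSet (pivMat G v w) Y
      = Submodule.map (phiMap G v w)
          (kerSet (G.adjMatrix (ZMod 2)) (symmDiff ({v, w} : Finset V) Y)) := by
    ext z
    simp only [Submodule.mem_map]
    constructor
    · intro hz
      obtain ⟨x, rfl⟩ := hsurj z
      exact ⟨x, (phiMap_mem_iff hvw Y x).mp hz, rfl⟩
    · rintro ⟨x, hx, rfl⟩
      exact (phiMap_mem_iff hvw Y x).mpr hx
  rw [hmap]
  exact (LinearEquiv.finrank_eq (Submodule.equivMapOfInjective _ hinj _)).symm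

end TransferAux

/-- The γ invariant is unchanged by pivoting on an edge: `γ(G) = γ(G^{vw})`. -/
theorem gamma_pivot_invariant {V : Type u} [Fintype V]
    (G : SimpleGraph V) {v w : V} (hvw : G.Adj v w) :
    gammaInv G = gammaInv (pivot G v w) := by
  letI instD : DecidableEq V := Classical.decEq V
  letI instG : DecidableRel G.Adj := Classical.decRel G.Adj
  letI instH : DecidableRel ((pivot G v w).comap (⇑(Equiv.swap v w))).Adj :=
    Classical.decRel _
  have hAdjH : SimpleGraph.adjMatrix (ZMod 2) ((pivot G v w).comap (⇑(Equiv.swap v w)))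
      = pivMat G v w := adjMatrix_pivotSwap hvw
  have hrankH : ∀ Y : Finset V, rankIn ((pivot G v w).comap (⇑(Equiv.swap v w))) Y
      = ((pivMat G v w).submatrix (fun i : Y => (i : V)) (fun i : Y => (i : V))).rank := by
    intro Y
    rw [← hAdjH]
    rfl
  have hrankG : ∀ T : Finset V, rankIn G T
      = ((G.adjMatrix (ZMod 2)).submatrix (fun i : T => (i : V)) (fun i : T => (i : V))).rank := by
    intro T; rfl
  have hkey : ∀ Y : Finset V,
      Y.card - rankIn ((pivot G v w).comap (⇑(Equiv.swap v w))) Y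
        = (symmDiff ({v, w} : Finset V) Y).card
          - rankIn G (symmDiff ({v, w} : Finset V) Y) := by
    intro Y
    have e1 := rank_add_nullity (pivMat G v w) Y
    have e2 := rank_add_nullity (G.adjMatrix (ZMod 2)) (symmDiff ({v, w} : Finset V) Y)
    have e3 := nullity_transfer hvw Y
    rw [hrankH Y, hrankG (symmDiff ({v, w} : Finset V) Y)]
    omega
  have hq : qNull ((pivot G v w).comap (⇑(Equiv.swap v w))) = qNull G := by
    unfold qNull
    refine Fintype.sum_equiv
      (Function.Involutive.toPerm (fun S => symmDiff ({v, w} : Finset V) S)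
        (by intro S; exact symmDiff_symmDiff_cancel_left _ _)) _ _ ?_
    intro Y
    rw [hkey Y]
    rfl
  have main : qNull G = qNull (pivot G v w) := by
    rw [← hq, qNull_comap (pivot G v w) (Equiv.swap v w)]
  unfold gammaInv
  rw [main]
end

section
/- Let G be a finite simple (loopless) graph, let u be a vertex of G, and let G' be the graph obtained from G by adding a pendant vertex w to u. Then q(G';x,y) = q(G;x,y) + (x² − 2x + y)·q(G − u; x, y), where G − u denotes the induced subgraph of G on V ∖ {u}. -/
open Polynomial

universe u

variable {V : Type u}

section InterlaceAux
open Matrix Finset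

section LA
variable {K : Type*} [Field K] {m n : Type*} [Fintype m] [Fintype n] [DecidableEq m] [DecidableEq n]

/-- prod submodule is equivalent to prod of submodules -/
def submoduleProdEquiv {R M N : Type*} [Ring R] [AddCommGroup M] [Module R M]
    [AddCommGroup N] [Module R N] (p : Submodule R M) (q : Submodule R N) :
    (p.prod q) ≃ₗ[R] p × q where
  toFun x := (⟨x.1.1, x.2.1⟩, ⟨x.1.2, x.2.2⟩)
  invFun x := ⟨(x.1.1, x.2.1), ⟨x.1.2, x.2.2⟩⟩
  left_inv x := rfl
  right_inv x := rfl
  map_add' x y := rfl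
  map_smul' c x := rfl

lemma range_prodMap' {R M N M' N' : Type*} [Ring R] [AddCommGroup M] [Module R M]
    [AddCommGroup N] [Module R N] [AddCommGroup M'] [Module R M'] [AddCommGroup N'] [Module R N']
    (f : M →ₗ[R] M') (g : N →ₗ[R] N') :
    LinearMap.range (f.prodMap g) = (LinearMap.range f).prod (LinearMap.range g) := by
  ext x
  simp only [LinearMap.mem_range, Submodule.mem_prod, LinearMap.prodMap_apply]
  constructor
  · rintro ⟨y, hy⟩
    exact ⟨⟨y.1, congrArg Prod.fst hy⟩, ⟨y.2, congrArg Prod.snd hy⟩⟩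
  · rintro ⟨⟨a, ha⟩, ⟨b, hb⟩⟩
    exact ⟨(a, b), by simp [ha, hb]⟩

lemma rank_fromBlocks_diag (A : Matrix m m K) (B : Matrix n n K) :
    (fromBlocks A 0 0 B).rank = A.rank + B.rank := by
  classical
  let e : (m ⊕ n → K) ≃ₗ[K] (m → K) × (n → K) := LinearEquiv.sumArrowLequivProdArrow m n K K
  have key : (fromBlocks A 0 0 B).mulVecLin
      = (e.symm.toLinearMap.comp ((A.mulVecLin.prodMap B.mulVecLin).comp e.toLinearMap)) := by
    apply LinearMap.ext
    intro v
    have hv : v = Sum.elim (v ∘ Sum.inl) (v ∘ Sum.inr) := by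
      funext i; cases i <;> rfl
    rw [Matrix.mulVecLin_apply]
    conv_lhs => rw [hv]
    rw [Matrix.fromBlocks_mulVec]
    funext i
    cases i with
    | inl i => simp [e, LinearEquiv.sumArrowLequivProdArrow, Equiv.sumArrowEquivProdArrow]
    | inr i => simp [e, LinearEquiv.sumArrowLequivProdArrow, Equiv.sumArrowEquivProdArrow]
  rw [Matrix.rank, key]
  rw [LinearMap.range_comp, LinearMap.range_comp]
  rw [LinearEquiv.range, Submodule.map_top]
  rw [LinearEquiv.finrank_map_eq]
  rw [range_prodMap']
  rw [(submoduleProdEquiv _ _).finrank_eq]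
  rw [Module.finrank_prod]
  rfl

end LA

section LA2
variable {K : Type*} [Field K] {m n : Type*} [Fintype m] [Fintype n] [DecidableEq m] [DecidableEq n]

lemma rank_fromBlocks_inv11 (A : Matrix m m K) (B : Matrix m n K) (C : Matrix n m K)
    (D : Matrix n n K) [Invertible A] :
    (fromBlocks A B C D).rank = Fintype.card m + (D - C * ⅟ A * B).rank := by
  rw [fromBlocks_eq_of_invertible₁₁ A B C D]
  have h1 : IsUnit (fromBlocks (1 : Matrix m m K) 0 (C * ⅟ A) 1).det := by
    rw [det_fromBlocks_zero₁₂]; simp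
  have h2 : IsUnit (fromBlocks (1 : Matrix m m K) (⅟ A * B) 0 1).det := by
    rw [det_fromBlocks_zero₂₁]; simp
  rw [Matrix.rank_mul_eq_left_of_isUnit_det _ _ h2]
  rw [Matrix.rank_mul_eq_right_of_isUnit_det _ _ h1]
  rw [rank_fromBlocks_diag]
  congr 1
  exact Matrix.rank_of_isUnit A (isUnit_of_invertible A)

end LA2

section LA3
variable {K : Type*} [Field K] {ι : Type*} [Fintype ι] [DecidableEq ι]

/-- index equiv for one added vertex -/
def optEquiv (ι : Type*) : Option ι ≃ ι ⊕ Unit where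
  toFun x := x.elim (Sum.inr ()) Sum.inl
  invFun x := x.elim some (fun _ => none)
  left_inv x := by cases x <;> rfl
  right_inv x := by rcases x with a | ⟨⟨⟩⟩ <;> rfl

lemma rank_option_zero (M : Matrix (Option ι) (Option ι) K)
    (h1 : ∀ j, M none j = 0) (h2 : ∀ i, M i none = 0) :
    M.rank = (M.submatrix some some).rank := by
  have := Matrix.rank_submatrix M (optEquiv ι).symm (optEquiv ι).symm
  rw [← this]
  have hN : M.submatrix (optEquiv ι).symm (optEquiv ι).symm
      = fromBlocks (M.submatrix some some) 0 0 (0 : Matrix Unit Unit K) := by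
    ext i j
    rcases i with i | ⟨⟩ <;> rcases j with j | ⟨⟩
    · rfl
    · exact h2 _
    · exact h1 _
    · exact h1 _
  rw [hN, rank_fromBlocks_diag, Matrix.rank_zero, add_zero]

/-- index equiv for two added vertices -/
def optEquiv2 (ι : Type*) : Option (Option ι) ≃ (Fin 2) ⊕ ι where
  toFun x := x.elim (Sum.inl 0) (fun y => y.elim (Sum.inl 1) Sum.inr)
  invFun x := x.elim (fun k => if k = 0 then none else some none) (fun i => some (some i))
  left_inv x := by rcases x with _ | (_ | i) <;> rfl
  right_inv x := by rcases x with k | i; · fin_cases k <;> rfl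
                    · rfl

lemma rank_option_pendant (M : Matrix (Option (Option ι)) (Option (Option ι)) K)
    (hww : M none none = 0) (hwu : M none (some none) = 1) (huw : M (some none) none = 1)
    (huu : M (some none) (some none) = 0)
    (hwo : ∀ j, M none (some (some j)) = 0) (how : ∀ i, M (some (some i)) none = 0) :
    M.rank = (M.submatrix (fun i => some (some i)) (fun j => some (some j))).rank + 2 := by
  have hr := Matrix.rank_submatrix M (optEquiv2 ι).symm (optEquiv2 ι).symm
  rw [← hr]
  set A := M.submatrix (fun i : ι => some (some i)) (fun j : ι => some (some j)) with hA
  set D : Matrix (Fin 2) (Fin 2) K := !![0, 1; 1, 0] with hD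
  set B : Matrix ι (Fin 2) K := Matrix.of (fun i k => M (some (some i)) ((optEquiv2 ι).symm (Sum.inl k))) with hB
  set C : Matrix (Fin 2) ι K := Matrix.of (fun k j => M ((optEquiv2 ι).symm (Sum.inl k)) (some (some j))) with hC
  have hN : M.submatrix (optEquiv2 ι).symm (optEquiv2 ι).symm = fromBlocks D C B A := by
    ext i j
    rcases i with k | i <;> rcases j with l | j
    · fin_cases k <;> fin_cases l <;>
        simp [hD, Matrix.submatrix_apply, optEquiv2, hww, hwu, huw, huu]
    · rfl
    · rfl
    · rfl
  have hDD : D * D = 1 := by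
    ext i j; fin_cases i <;> fin_cases j <;> simp [hD, Matrix.mul_apply, Fin.sum_univ_two]
  letI : Invertible D := ⟨D, hDD, hDD⟩
  have hinv : ⅟ D = D := rfl
  have hBDC : A - B * ⅟ D * C = A := by
    rw [hinv]
    have : B * D * C = 0 := by
      ext i j
      simp only [Matrix.mul_apply, Fin.sum_univ_two, Matrix.zero_apply]
      have hB0 : B i 0 = 0 := how i
      have hC0 : C 0 j = 0 := hwo j
      simp [hD, hB0, hC0]
    rw [this, sub_zero]
  rw [hN, rank_fromBlocks_inv11, hBDC]
  simp [add_comm]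

end LA3


open Matrix Finset

section Helpers

variable {K : Type*} [Field K]

lemma rank_eq_of_entries {ι κ : Type*} [Fintype ι] [Fintype κ]
    (M : Matrix ι ι K) (N : Matrix κ κ K) (e : ι ≃ κ)
    (h : ∀ i j, M i j = N (e i) (e j)) : M.rank = N.rank := by
  have : M = N.submatrix e e := by ext i j; exact h i j
  rw [this, Matrix.rank_submatrix]

-- adjacency facts
lemma addPendant_adj_some_some [Fintype V] (G : SimpleGraph V) (u : V) (a b : V) :
    (addPendant G u).Adj (some a) (some b) ↔ G.Adj a b := by
  rw [addPendant, SimpleGraph.fromRel_adj]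
  constructor
  · rintro ⟨hne, (⟨h, -⟩ | ⟨a', b', ha, hb, hadj⟩) | (⟨h, -⟩ | ⟨a', b', hb, ha, hadj⟩)⟩
    · exact absurd h (by simp)
    · cases ha; cases hb; exact hadj
    · exact absurd h (by simp)
    · cases ha; cases hb; exact hadj.symm
  · intro h
    exact ⟨by simpa using h.ne, Or.inl (Or.inr ⟨a, b, rfl, rfl, h⟩)⟩

lemma addPendant_adj_none_some [Fintype V] (G : SimpleGraph V) (u : V) (a : V) :
    (addPendant G u).Adj none (some a) ↔ a = u := by
  rw [addPendant, SimpleGraph.fromRel_adj]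
  constructor
  · rintro ⟨hne, (⟨-, h⟩ | ⟨a', b', ha, -, -⟩) | (⟨-, h⟩ | ⟨a', b', -, ha, -⟩)⟩
    · exact Option.some_injective V h
    · exact absurd ha (by simp)
    · exact absurd h (by simp)
    · exact absurd ha (by simp)
  · rintro rfl
    exact ⟨by simp, Or.inl (Or.inl ⟨rfl, rfl⟩)⟩

-- generic rankIn compat
lemma rankIn_eq_of_adjIff {ι κ : Type*} [Fintype ι] [Fintype κ]
    (G₁ : SimpleGraph ι) (G₂ : SimpleGraph κ) (S₁ : Finset ι) (S₂ : Finset κ)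
    (e : ↥S₁ ≃ ↥S₂) (h : ∀ i j : ↥S₁, G₁.Adj i j ↔ G₂.Adj (e i) (e j)) :
    rankIn G₁ S₁ = rankIn G₂ S₂ := by
  unfold rankIn
  letI := Classical.decRel G₁.Adj
  letI := Classical.decRel G₂.Adj
  apply rank_eq_of_entries _ _ e
  intro i j
  simp only [Matrix.submatrix_apply, SimpleGraph.adjMatrix_apply]
  exact if_congr (h i j) rfl rfl

/-- the equiv between a Finset and its image under an embedding -/
noncomputable def mapSetEquiv {α β : Type*} (f : α ↪ β) (S : Finset α) :
    ↥S ≃ ↥(S.map f) :=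
  Equiv.ofBijective (fun x => ⟨f x, Finset.mem_map_of_mem f x.2⟩)
    ⟨fun x y hxy => Subtype.ext (f.injective (congrArg Subtype.val hxy)),
     by rintro ⟨y, hy⟩
        rw [Finset.mem_map] at hy
        obtain ⟨a, ha, rfl⟩ := hy
        exact ⟨⟨a, ha⟩, rfl⟩⟩

lemma rankIn_le_card [Fintype V] (G : SimpleGraph V) (S : Finset V) :
    rankIn G S ≤ S.card := by
  unfold rankIn
  letI := Classical.decRel G.Adj
  calc _ ≤ Fintype.card ↥S := Matrix.rank_le_card_width _
  _ = S.card := Fintype.card_coe S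

end Helpers



section Main

variable [Fintype V] [DecidableEq V] (G : SimpleGraph V) (u : V)

lemma rankIn_map_some (S : Finset V) :
    rankIn (addPendant G u) (S.map Function.Embedding.some) = rankIn G S := by
  refine (rankIn_eq_of_adjIff G (addPendant G u) S _ (mapSetEquiv _ S) ?_).symm
  intro i j
  exact (addPendant_adj_some_some G u i j).symm

lemma rankIn_delVert (T : Finset {x : V // x ≠ u}) :
    rankIn (delVert G u) T = rankIn G (T.map ⟨Subtype.val, Subtype.val_injective⟩) := by
  refine rankIn_eq_of_adjIff _ G T _ (mapSetEquiv _ T) ?_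
  intro i j
  rfl

lemma rankIn_insert_none (S : Finset V) (hu : u ∉ S) :
    rankIn (addPendant G u) (insert none (S.map Function.Embedding.some)) = rankIn G S := by
  classical
  rw [← rankIn_map_some G u S]
  set G' := addPendant G u with hG'
  set S' := S.map (Function.Embedding.some : V ↪ Option V) with hS'
  have hnone : (none : Option V) ∉ S' := by simp [hS']
  have hSmem : ∀ a : Option V, a ∈ S' → ∃ b ∈ S, some b = a := by
    intro a ha; simpa [hS', Finset.mem_map] using ha
  have hnadj : ∀ a : Option V, a ∈ S' → ¬ G'.Adj none a := by
    intro a ha hadj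
    obtain ⟨b, hb, rfl⟩ := hSmem a ha
    rw [hG', addPendant_adj_none_some] at hadj
    exact hu (hadj ▸ hb)
  let e : Option ↥S' ≃ ↥(insert none S') := (Finset.subtypeInsertEquivOption hnone).symm
  unfold rankIn
  rw [← Matrix.rank_submatrix _ e e]
  rw [rank_option_zero]
  · congr 1
  · rintro (_ | j)
    · simp only [Matrix.submatrix_apply, SimpleGraph.adjMatrix_apply]
      exact if_neg (G'.irrefl)
    · simp only [Matrix.submatrix_apply, SimpleGraph.adjMatrix_apply]
      exact if_neg (hnadj _ j.2)
  · rintro (_ | i)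
    · simp only [Matrix.submatrix_apply, SimpleGraph.adjMatrix_apply]
      exact if_neg (G'.irrefl)
    · simp only [Matrix.submatrix_apply, SimpleGraph.adjMatrix_apply]
      exact if_neg (fun h => hnadj _ i.2 h.symm)

lemma rankIn_insert_both (S : Finset V) (hu : u ∉ S) :
    rankIn (addPendant G u)
      (insert none (insert (some u) (S.map Function.Embedding.some)))
      = rankIn G S + 2 := by
  classical
  rw [← rankIn_map_some G u S]
  set G' := addPendant G u with hG'
  set S' := S.map (Function.Embedding.some : V ↪ Option V) with hS'
  have hSmem : ∀ a : Option V, a ∈ S' → ∃ b ∈ S, some b = a := by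
    intro a ha; simpa [hS', Finset.mem_map] using ha
  have husome : (some u : Option V) ∉ S' := by
    intro h; obtain ⟨b, hb, hba⟩ := hSmem _ h
    exact hu ((Option.some_injective V hba) ▸ hb)
  have hnone : (none : Option V) ∉ insert (some u) S' := by
    simp only [Finset.mem_insert]
    push_neg
    exact ⟨by simp, by intro h; obtain ⟨b, -, hba⟩ := hSmem _ h; exact absurd hba (by simp)⟩
  have hnadj : ∀ a : Option V, a ∈ S' → ¬ G'.Adj none a := by
    intro a ha hadj
    obtain ⟨b, hb, rfl⟩ := hSmem a ha
    rw [hG', addPendant_adj_none_some] at hadj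
    exact hu (hadj ▸ hb)
  let e : Option (Option ↥S') ≃ ↥(insert none (insert (some u) S')) :=
    (Equiv.optionCongr (Finset.subtypeInsertEquivOption husome).symm).trans
      (Finset.subtypeInsertEquivOption hnone).symm
  have h0 : ((e none : ↥(insert none (insert (some u) S'))) : Option V) = none := rfl
  have h1 : ((e (some none) : ↥(insert none (insert (some u) S'))) : Option V) = some u := rfl
  have h2 : ∀ j : ↥S', ((e (some (some j)) : ↥(insert none (insert (some u) S'))) : Option V)
      = (j : Option V) := fun j => rfl
  have hadj_nu : G'.Adj none (some u) := by rw [hG', addPendant_adj_none_some]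
  unfold rankIn
  rw [← Matrix.rank_submatrix _ e e]
  rw [rank_option_pendant]
  · congr 1
  · simp only [Matrix.submatrix_apply, SimpleGraph.adjMatrix_apply, h0]
    exact if_neg (G'.irrefl)
  · simp only [Matrix.submatrix_apply, SimpleGraph.adjMatrix_apply, h0, h1]
    exact if_pos hadj_nu
  · simp only [Matrix.submatrix_apply, SimpleGraph.adjMatrix_apply, h0, h1]
    exact if_pos hadj_nu.symm
  · simp only [Matrix.submatrix_apply, SimpleGraph.adjMatrix_apply, h1]
    exact if_neg (G'.irrefl)
  · intro j
    simp only [Matrix.submatrix_apply, SimpleGraph.adjMatrix_apply, h0, h2]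
    exact if_neg (hnadj _ j.2)
  · intro i
    simp only [Matrix.submatrix_apply, SimpleGraph.adjMatrix_apply, h0, h2]
    exact if_neg (fun h => hnadj _ i.2 h.symm)

end Main

section Sums

lemma powerset_map' {α β : Type*} (f : α ↪ β) (s : Finset α) :
    (s.map f).powerset = s.powerset.map ⟨Finset.map f, Finset.map_injective f⟩ := by
  ext t
  simp only [Finset.mem_powerset, Finset.mem_map, Function.Embedding.coeFn_mk]
  constructor
  · intro h
    obtain ⟨u', hu', rfl⟩ := Finset.subset_map_iff.mp h
    exact ⟨u', hu', rfl⟩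
  · rintro ⟨a, ha, rfl⟩
    exact Finset.map_subset_map.mpr ha

lemma sum_powerset_map {α β M : Type*} [AddCommMonoid M] (f : α ↪ β) (s : Finset α)
    (g : Finset β → M) :
    ∑ t ∈ (s.map f).powerset, g t = ∑ t ∈ s.powerset, g (t.map f) := by
  rw [powerset_map', Finset.sum_map]
  rfl

end Sums

section Final

variable [Fintype V] [DecidableEq V]

theorem interlaceQ_addPendant' (G : SimpleGraph V) (u : V) :
    interlaceQ (addPendant G u) =
      interlaceQ G +
        (MvPolynomial.X 0 ^ 2 - 2 * MvPolynomial.X 0 + MvPolynomial.X 1) *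
          interlaceQ (delVert G u) := by
  classical
  set x : MvPolynomial (Fin 2) ℤ := MvPolynomial.X 0 with hx
  set y : MvPolynomial (Fin 2) ℤ := MvPolynomial.X 1 with hy
  set G' := addPendant G u with hG'
  set W := {v : V // v ≠ u} with hW
  set embS : V ↪ Option V := Function.Embedding.some with hembS
  set embW : W ↪ V := ⟨Subtype.val, Subtype.val_injective⟩ with hembW
  have hunivO : (Finset.univ : Finset (Option V)) = insert none (Finset.univ.map embS) := by
    ext a
    rcases a with _ | a <;> simp [hembS]
  have hnoneS : (none : Option V) ∉ Finset.univ.map embS := by simp [hembS]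
  have hunivV : (Finset.univ : Finset V) = insert u ((Finset.univ : Finset W).map embW) := by
    ext a
    simp only [Finset.mem_insert, Finset.mem_map, Finset.mem_univ, true_iff, hembW,
      Function.Embedding.coeFn_mk]
    by_cases h : a = u
    · exact Or.inl h
    · exact Or.inr ⟨⟨a, h⟩, trivial, rfl⟩
  have huW : u ∉ (Finset.univ : Finset W).map embW := by
    simp only [Finset.mem_map, hembW, Function.Embedding.coeFn_mk]
    rintro ⟨⟨a, ha⟩, -, h⟩
    exact ha h
  -- expand interlaceQ G'
  rw [interlaceQ]
  rw [show (Finset.univ : Finset (Finset (Option V))) = Finset.univ.powerset from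
    (Finset.powerset_univ).symm]
  rw [hunivO, Finset.sum_powerset_insert hnoneS, sum_powerset_map, sum_powerset_map,
    Finset.powerset_univ]
  -- piece 1
  have piece1 : ∑ S : Finset V,
      (x - 1) ^ rankIn G' (S.map embS) * (y - 1) ^ ((S.map embS).card - rankIn G' (S.map embS))
      = interlaceQ G := by
    rw [interlaceQ]
    refine Finset.sum_congr rfl fun S _ => ?_
    rw [hembS, rankIn_map_some G u S, Finset.card_map]
  rw [piece1]
  -- piece 2
  have piece2 : ∑ S : Finset V,
      (x - 1) ^ rankIn G' (insert none (S.map embS)) *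
        (y - 1) ^ ((insert none (S.map embS)).card - rankIn G' (insert none (S.map embS)))
      = (x ^ 2 - 2 * x + y) * interlaceQ (delVert G u) := by
    rw [show (Finset.univ : Finset (Finset V)) = Finset.univ.powerset from
      (Finset.powerset_univ).symm]
    rw [hunivV, Finset.sum_powerset_insert huW, sum_powerset_map, sum_powerset_map,
      Finset.powerset_univ]
    have hcard : ∀ T : Finset W, (T.map embW).card = T.card := fun T => Finset.card_map _
    have hu' : ∀ T : Finset W, u ∉ T.map embW := by
      intro T h
      rw [hembW] at h
      simp only [Finset.mem_map, Function.Embedding.coeFn_mk] at h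
      obtain ⟨⟨a, ha⟩, -, h'⟩ := h
      exact ha h'
    have hrle : ∀ T : Finset W, rankIn G (T.map embW) ≤ T.card := by
      intro T
      calc rankIn G (T.map embW) ≤ (T.map embW).card := rankIn_le_card G _
      _ = T.card := hcard T
    have hrdel : ∀ T : Finset W, rankIn (delVert G u) T = rankIn G (T.map embW) := by
      intro T; rw [hembW]; exact rankIn_delVert G u T
    have hnone1 : ∀ T : Finset W, (none : Option V) ∉ (T.map embW).map embS := by
      intro T; simp [hembS]
    have hsome1 : ∀ T : Finset W, (some u : Option V) ∉ (T.map embW).map embS := by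
      intro T h
      rw [Finset.map_map] at h
      simp only [Finset.mem_map, Function.Embedding.trans_apply, hembS, hembW,
        Function.Embedding.coeFn_mk, Function.Embedding.some_apply, Option.some.injEq] at h
      obtain ⟨⟨a, ha⟩, -, h'⟩ := h
      exact ha h'
    have hnone2 : ∀ T : Finset W,
        (none : Option V) ∉ insert (some u) ((T.map embW).map embS) := by
      intro T
      rw [Finset.mem_insert]
      push_neg
      exact ⟨by simp, hnone1 T⟩
    have termA : ∀ T : Finset W,
        (x - 1) ^ rankIn G' (insert none ((T.map embW).map embS)) *
          (y - 1) ^ ((insert none ((T.map embW).map embS)).card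
            - rankIn G' (insert none ((T.map embW).map embS)))
        = (y - 1) * ((x - 1) ^ rankIn (delVert G u) T
            * (y - 1) ^ (T.card - rankIn (delVert G u) T)) := by
      intro T
      have h1 : rankIn G' (insert none ((T.map embW).map embS)) = rankIn G (T.map embW) := by
        rw [hG', hembS]
        exact rankIn_insert_none G u (T.map embW) (hu' T)
      have h2 : (insert none ((T.map embW).map embS)).card = T.card + 1 := by
        rw [Finset.card_insert_of_notMem (hnone1 T), Finset.card_map, hcard]
      rw [h1, h2, hrdel T]
      have h3 : T.card + 1 - rankIn G (T.map embW) = (T.card - rankIn G (T.map embW)) + 1 := by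
        have := hrle T; omega
      rw [h3, pow_succ]
      ring
    have termB : ∀ T : Finset W,
        (x - 1) ^ rankIn G' (insert none ((insert u (T.map embW)).map embS)) *
          (y - 1) ^ ((insert none ((insert u (T.map embW)).map embS)).card
            - rankIn G' (insert none ((insert u (T.map embW)).map embS)))
        = (x - 1) ^ 2 * ((x - 1) ^ rankIn (delVert G u) T
            * (y - 1) ^ (T.card - rankIn (delVert G u) T)) := by
      intro T
      have hmi : (insert u (T.map embW)).map embS = insert (some u) ((T.map embW).map embS) := by
        rw [Finset.map_insert]
        rfl
      have h1 : rankIn G' (insert none ((insert u (T.map embW)).map embS))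
          = rankIn G (T.map embW) + 2 := by
        rw [hmi, hG', hembS]
        exact rankIn_insert_both G u (T.map embW) (hu' T)
      have h2 : (insert none ((insert u (T.map embW)).map embS)).card = T.card + 2 := by
        rw [hmi, Finset.card_insert_of_notMem (hnone2 T),
          Finset.card_insert_of_notMem (hsome1 T), Finset.card_map, hcard]
      rw [h1, h2, hrdel T]
      have h3 : T.card + 2 - (rankIn G (T.map embW) + 2) = T.card - rankIn G (T.map embW) := by
        omega
      rw [h3, pow_add]
      ring
    rw [Finset.sum_congr rfl (fun T _ => termA T), Finset.sum_congr rfl (fun T _ => termB T)]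
    rw [← Finset.mul_sum, ← Finset.mul_sum, interlaceQ]
    ring
  rw [piece2]

end Final


end InterlaceAux

/-- If `G'` results from adding a pendant vertex `w` to a vertex `u` of a loopless graph
`G`, then `q(G';x,y) = q(G;x,y) + (x² - 2x + y)·q(G - u;x,y)`. -/
theorem interlaceQ_addPendant {V : Type u} [Fintype V] [DecidableEq V]
    (G : SimpleGraph V) (u : V) :
    interlaceQ (addPendant G u) =
      interlaceQ G +
        (MvPolynomial.X 0 ^ 2 - 2 * MvPolynomial.X 0 + MvPolynomial.X 1) *
          interlaceQ (delVert G u) := by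
  exact interlaceQ_addPendant' G u
end
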